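/- Let n ≥ 4 and let α, β ∈ K satisfy α ≠ β and α ≠ −β. If T : Mat_n(K) → Mat_n(K) is a bijective K-linear map that stabilizes det^{(α,β)}, then the assignment sending each pair (i,j) to the unique position (i',j') of the nonzero entry of T(E_{ij}) is a bijection of {1,…,n} × {1,…,n} onto itself, and there exist nonzero scalars c_{ij} ∈ K with T(E_{ij}) = c_{ij}·E_{i'j'} for all i, j. -/

import Mathlib

open Matrix Finset

noncomputable def evenDet {K : Type*} [Field K] {n : ℕ} (A : Matrix (Fin n) (Fin n) K) : K :=
  ∑ σ ∈ Finset.univ.filter (fun σ : Equiv.Perm (Fin n) => Equiv.Perm.sign σ = 1),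
    ∏ i, A i (σ i)

noncomputable def oddDet {K : Type*} [Field K] {n : ℕ} (A : Matrix (Fin n) (Fin n) K) : K :=
  ∑ σ ∈ Finset.univ.filter (fun σ : Equiv.Perm (Fin n) => Equiv.Perm.sign σ = -1),
    ∏ i, A i (σ i)

/-- The generalized determinant `det^{(α,β)}`. -/
noncomputable def gdet {K : Type*} [Field K] {n : ℕ} (α β : K) (A : Matrix (Fin n) (Fin n) K) : K :=
  α * evenDet A + β * oddDet A

/-- The permutation matrix `P = (δ_{i, σ(j)})`. -/
def permMat (K : Type*) [Field K] {n : ℕ} (σ : Equiv.Perm (Fin n)) : Matrix (Fin n) (Fin n) K :=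
  fun i j => if i = σ j then 1 else 0
/-!
Call `B` an affine direction if `t ↦ det^{(α,β)}(A + t • B)` is affine for every `A`. Matrices
supported in a single row or column are affine directions, and so are their images under `T`.
Testing an affine direction `B` against a partial permutation matrix `A` that fills every row
except `i₁, i₂`, the coefficient of `t²` gives
`w(σ) B i₁ (σ i₁) B i₂ (σ i₂) + w'(σ) B i₁ (σ i₂) B i₂ (σ i₁) = 0`,
where `{w(σ), w'(σ)} = {α, β}` is decided by the sign of `σ`. As `n ≥ 4`, composing `σ` with a
transposition of two further points exchanges the weights, and `α ≠ ±β` then forces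
`B i₁ j₁ * B i₂ j₂ = 0`: the nonzero entries of `T(E_ij)` lie in one row or one column. If
`T(E_ij)` had two nonzero entries in a row `r`, then applying this to `T(E_ij + t E_ij')` for
suitable `t` would push the images of `E_ij'` and `E_i'j` into row `r`, that is, `n + 1`
independent matrices into an `n`-dimensional space. Columns follow by transposition, and
injectivity of `T` makes the resulting position map injective.
-/

open Polynomial Equiv

theorem Equiv.Perm.exists_apply_eq_and_apply_eq {α : Type*} [DecidableEq α] {a₁ a₂ b₁ b₂ : α}
    (ha : a₁ ≠ a₂) (hb : b₁ ≠ b₂) : ∃ σ : Perm α, σ a₁ = b₁ ∧ σ a₂ = b₂ := by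
  have h : swap a₁ b₁ a₂ ≠ b₁ := by
    simpa only [swap_apply_left] using (swap a₁ b₁).injective.ne ha.symm
  refine ⟨swap b₂ (swap a₁ b₁ a₂) * swap a₁ b₁, ?_, ?_⟩
  · rw [Perm.mul_apply, swap_apply_left, swap_apply_of_ne_of_ne hb h.symm]
  · rw [Perm.mul_apply, swap_apply_right]

theorem Equiv.Perm.eq_one_or_eq_swap_of_forall_ne {α : Type*} [DecidableEq α] {ρ : Perm α}
    {a b : α} (h : ∀ i, i ≠ a → i ≠ b → ρ i = i) : ρ = 1 ∨ ρ = swap a b := by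
  have hmaps : ∀ x, ρ x = a ∨ ρ x = b ∨ ρ x = x := fun x => by
    by_contra! hx
    exact hx.2.2 (ρ.injective (h _ hx.1 hx.2.1))
  have hinj := ρ.injective
  by_cases ha : ρ a = b
  · right; ext i; grind
  · left; ext i; rw [Perm.one_apply]; grind

theorem Equiv.Perm.eq_or_eq_swap_mul_of_forall_ne {α : Type*} [DecidableEq α] {σ τ : Perm α}
    {a b : α} (h : ∀ i, i ≠ a → i ≠ b → σ i = τ i) : σ = τ ∨ σ = swap (τ a) (τ b) * τ := by
  have hρ : ∀ i, i ≠ a → i ≠ b → (τ⁻¹ * σ) i = i := fun i ha hb => by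
    rw [Perm.mul_apply, h i ha hb]; simp
  rcases eq_one_or_eq_swap_of_forall_ne hρ with hρ | hρ
  · exact .inl (inv_mul_eq_one.mp hρ).symm
  · exact .inr (by rw [← mul_swap_eq_swap_mul, ← hρ, mul_inv_cancel_left])

section SignWeight

variable {R ι : Type*} [DecidableEq ι] [Fintype ι]

def signWeight (α β : R) (σ : Perm ι) : R :=
  if Perm.sign σ = 1 then α else β

theorem signWeight_swap_mul (α β : R) {a b : ι} (hab : a ≠ b) (σ : Perm ι) :
    signWeight α β (swap a b * σ) = signWeight β α σ := by
  rcases Int.units_eq_one_or (Perm.sign σ) with h | h <;>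
    simp [signWeight, Perm.sign_mul, Perm.sign_swap hab, h]

theorem signWeight_mul_swap (α β : R) {a b : ι} (hab : a ≠ b) (σ : Perm ι) :
    signWeight α β (σ * swap a b) = signWeight β α σ := by
  rcases Int.units_eq_one_or (Perm.sign σ) with h | h <;>
    simp [signWeight, Perm.sign_mul, Perm.sign_swap hab, h]

theorem signWeight_inv (α β : R) (σ : Perm ι) : signWeight α β σ⁻¹ = signWeight α β σ := by
  simp [signWeight]

theorem sq_signWeight_ne [CommRing R] [NoZeroDivisors R] {α β : R} (hαβ : α ≠ β)
    (hαβ' : α ≠ -β) (σ : Perm ι) :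
    signWeight α β σ ^ 2 ≠ signWeight β α σ ^ 2 := by
  unfold signWeight
  split_ifs
  · exact fun h => (sq_eq_sq_iff_eq_or_eq_neg.mp h).elim hαβ hαβ'
  · exact fun h => (sq_eq_sq_iff_eq_or_eq_neg.mp h).elim hαβ.symm
      fun h' => hαβ' (by rw [h', neg_neg])

end SignWeight

section GeneralizedDeterminant

variable {K : Type*} [Field K] {n : ℕ}

theorem gdet_eq_sum (α β : K) (A : Matrix (Fin n) (Fin n) K) :
    gdet α β A = ∑ σ : Perm (Fin n), signWeight α β σ * ∏ i, A i (σ i) := by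
  simp only [signWeight, ite_mul, Finset.sum_ite, gdet, evenDet, oddDet, Finset.mul_sum,
    Int.units_ne_iff_eq_neg]

theorem gdet_transpose (α β : K) (A : Matrix (Fin n) (Fin n) K) :
    gdet α β Aᵀ = gdet α β A := by
  rw [gdet_eq_sum, gdet_eq_sum]
  refine Fintype.sum_equiv (Equiv.inv _) _ _ fun σ => ?_
  rw [Equiv.inv_apply, signWeight_inv, ← Equiv.prod_comp σ (fun i => A i (σ⁻¹ i))]
  simp

def IsAffineDirection (α β : K) (B : Matrix (Fin n) (Fin n) K) : Prop :=
  ∃ h : Matrix (Fin n) (Fin n) K → K, ∀ A (t : K), gdet α β (A + t • B) = gdet α β A + t * h A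

theorem isAffineDirection_of_eq_zero_off_row (α β : K) {M : Matrix (Fin n) (Fin n) K} {r : Fin n}
    (hM : ∀ a ≠ r, ∀ b, M a b = 0) : IsAffineDirection α β M := by
  refine ⟨fun A => ∑ σ : Perm (Fin n),
    signWeight α β σ * (M r (σ r) * ∏ i ∈ univ.erase r, A i (σ i)), fun A t => ?_⟩
  rw [gdet_eq_sum, gdet_eq_sum, Finset.mul_sum, ← Finset.sum_add_distrib]
  refine Finset.sum_congr rfl fun σ _ => ?_
  have hrest : ∏ i ∈ univ.erase r, (A + t • M) i (σ i) = ∏ i ∈ univ.erase r, A i (σ i) :=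
    Finset.prod_congr rfl fun i hi => by simp [hM i (Finset.ne_of_mem_erase hi)]
  rw [← Finset.mul_prod_erase univ _ (mem_univ r), ← Finset.mul_prod_erase univ _ (mem_univ r),
    hrest, Matrix.add_apply, Matrix.smul_apply, smul_eq_mul]
  ring

theorem IsAffineDirection.transpose {α β : K} {B : Matrix (Fin n) (Fin n) K}
    (hB : IsAffineDirection α β B) : IsAffineDirection α β Bᵀ := by
  obtain ⟨h, hh⟩ := hB
  refine ⟨fun A => h Aᵀ, fun A t => ?_⟩
  rw [← gdet_transpose, transpose_add, transpose_smul, transpose_transpose, hh, gdet_transpose]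

theorem isAffineDirection_of_eq_zero_off_col (α β : K) {M : Matrix (Fin n) (Fin n) K} {c : Fin n}
    (hM : ∀ a, ∀ b ≠ c, M a b = 0) : IsAffineDirection α β M := by
  simpa using (isAffineDirection_of_eq_zero_off_row α β (M := Mᵀ) fun b hb a => hM a b hb).transpose

theorem IsAffineDirection.map {α β : K} {B : Matrix (Fin n) (Fin n) K}
    (T : Matrix (Fin n) (Fin n) K ≃ₗ[K] Matrix (Fin n) (Fin n) K)
    (hT : ∀ A, gdet α β (T A) = gdet α β A) (hB : IsAffineDirection α β B) :
    IsAffineDirection α β (T B) := by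
  obtain ⟨h, hh⟩ := hB
  refine ⟨fun A => h (T.symm A), fun A t => ?_⟩
  have hA : A + t • T B = T (T.symm A + t • B) := by simp
  rw [hA, hT, hh, ← hT (T.symm A), T.apply_symm_apply]

theorem coeff_two_prod_C_add_C_mul_X {R ι : Type*} [CommSemiring R] [Fintype ι] [DecidableEq ι]
    (c b : ι → R) {i₁ i₂ : ι} (h : i₁ ≠ i₂) (h₁ : c i₁ = 0) (h₂ : c i₂ = 0) :
    (∏ i, (C (c i) + C (b i) * X)).coeff 2 =
      b i₁ * b i₂ * ∏ i ∈ (univ.erase i₁).erase i₂, c i := by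
  set s := (univ.erase i₁).erase i₂
  rw [← mul_prod_erase univ _ (mem_univ i₁),
    ← mul_prod_erase _ _ (mem_erase.2 ⟨h.symm, mem_univ i₂⟩), h₁, h₂]
  have hX : (C 0 + C (b i₁) * X) * ((C 0 + C (b i₂) * X) * ∏ i ∈ s, (C (c i) + C (b i) * X)) =
      (C (b i₁ * b i₂) * ∏ i ∈ s, (C (c i) + C (b i) * X)) * X ^ 2 := by
    simp only [C_0, zero_add, C_mul]
    ring
  rw [hX, ← zero_add 2, coeff_mul_X_pow, coeff_zero_eq_eval_zero]
  simp [eval_prod]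

noncomputable def gdetLine (α β : K) (A B : Matrix (Fin n) (Fin n) K) : K[X] :=
  ∑ σ : Perm (Fin n), C (signWeight α β σ) * ∏ i, (C (A i (σ i)) + C (B i (σ i)) * X)

theorem eval_gdetLine (α β : K) (A B : Matrix (Fin n) (Fin n) K) (t : K) :
    (gdetLine α β A B).eval t = gdet α β (A + t • B) := by
  simp [gdetLine, gdet_eq_sum, eval_finsetSum, eval_prod, mul_comm t]

theorem IsAffineDirection.coeff_gdetLine_two [Infinite K] {α β : K}
    {B : Matrix (Fin n) (Fin n) K} (hB : IsAffineDirection α β B) (A : Matrix (Fin n) (Fin n) K) :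
    (gdetLine α β A B).coeff 2 = 0 := by
  obtain ⟨h, hh⟩ := hB
  have hline : gdetLine α β A B = C (gdet α β A) + C (h A) * X :=
    Polynomial.funext fun t => by simp [eval_gdetLine, hh, mul_comm t]
  simp [hline]

theorem coeff_gdetLine_two_of_partialPerm (α β : K) (B : Matrix (Fin n) (Fin n) K)
    (σ₀ : Perm (Fin n)) {i₁ i₂ : Fin n} (h : i₁ ≠ i₂) :
    (gdetLine α β (of fun a b => if a ≠ i₁ ∧ a ≠ i₂ ∧ b = σ₀ a then 1 else 0) B).coeff 2 =
      signWeight α β σ₀ * (B i₁ (σ₀ i₁) * B i₂ (σ₀ i₂)) +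
        signWeight β α σ₀ * (B i₁ (σ₀ i₂) * B i₂ (σ₀ i₁)) := by
  set P : Matrix (Fin n) (Fin n) K := of fun a b => if a ≠ i₁ ∧ a ≠ i₂ ∧ b = σ₀ a then 1 else 0
  set s := (univ.erase i₁).erase i₂
  have hs : ∀ {i}, i ∈ s ↔ i ≠ i₁ ∧ i ≠ i₂ := by simp [s, and_comm]
  have hcoeff : ∀ σ : Perm (Fin n), (∏ i, (C (P i (σ i)) + C (B i (σ i)) * X)).coeff 2 =
      B i₁ (σ i₁) * B i₂ (σ i₂) * ∏ i ∈ s, P i (σ i) := fun σ =>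
    coeff_two_prod_C_add_C_mul_X _ _ h (by simp [P]) (by simp [P])
  have hP : ∀ σ : Perm (Fin n), (∀ i ∈ s, σ i = σ₀ i) → ∏ i ∈ s, P i (σ i) = 1 := fun σ hσ =>
    prod_eq_one fun i hi => by simp [P, hs.1 hi, hσ i hi]
  set σ₁ := swap (σ₀ i₁) (σ₀ i₂) * σ₀
  have hσ₀ : σ₀ i₁ ≠ σ₀ i₂ := σ₀.injective.ne h
  have hσ₁ : ∀ i ∈ s, σ₁ i = σ₀ i := fun i hi =>
    swap_apply_of_ne_of_ne (σ₀.injective.ne (hs.1 hi).1) (σ₀.injective.ne (hs.1 hi).2)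
  have hne : σ₀ ≠ σ₁ := fun h' => hσ₀ (by simpa [σ₁] using congrArg (· i₁) h')
  simp only [gdetLine, finsetSum_coeff, coeff_C_mul, hcoeff]
  rw [Fintype.sum_eq_add σ₀ σ₁ hne, hP σ₀ fun _ _ => rfl, hP σ₁ hσ₁,
    signWeight_swap_mul α β hσ₀]
  · simp [σ₁]
  · rintro σ ⟨hσσ₀, hσσ₁⟩
    obtain ⟨i, hi, hσi⟩ : ∃ i ∈ s, σ i ≠ σ₀ i := by
      by_contra! hagree
      exact (Perm.eq_or_eq_swap_mul_of_forall_ne fun i h₁ h₂ => hagree i (hs.2 ⟨h₁, h₂⟩)).elim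
        hσσ₀ hσσ₁
    rw [prod_eq_zero hi (by simp [P, hσi]), mul_zero, mul_zero]

def IsCrossFree {m n R : Type*} [MulZeroClass R] (B : Matrix m n R) : Prop :=
  ∀ ⦃i₁ i₂ j₁ j₂⦄, i₁ ≠ i₂ → j₁ ≠ j₂ → B i₁ j₁ * B i₂ j₂ = 0

theorem eq_zero_of_mul_add_mul_eq_zero {R : Type*} [CommRing R] [NoZeroDivisors R] {u v x y : R}
    (huv : u ^ 2 ≠ v ^ 2) (h₁ : u * x + v * y = 0) (h₂ : v * x + u * y = 0) : x = 0 := by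
  have h : (u ^ 2 - v ^ 2) * x = 0 := by linear_combination u * h₁ - v * h₂
  exact (mul_eq_zero.mp h).resolve_left (sub_ne_zero.mpr huv)

theorem IsAffineDirection.isCrossFree [Infinite K] (hn : 4 ≤ n) {α β : K} (hαβ : α ≠ β)
    (hαβ' : α ≠ -β) {B : Matrix (Fin n) (Fin n) K} (hB : IsAffineDirection α β B) :
    IsCrossFree B := by
  intro i₁ i₂ j₁ j₂ hi hj
  have hrel : ∀ σ : Perm (Fin n), signWeight α β σ * (B i₁ (σ i₁) * B i₂ (σ i₂)) +
      signWeight β α σ * (B i₁ (σ i₂) * B i₂ (σ i₁)) = 0 := fun σ => by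
    rw [← coeff_gdetLine_two_of_partialPerm α β B σ hi]
    exact hB.coeff_gdetLine_two _
  obtain ⟨σ, hσ₁, hσ₂⟩ := Perm.exists_apply_eq_and_apply_eq hi hj
  obtain ⟨k₁, hk₁, k₂, hk₂, hk⟩ : ∃ k₁ ∈ (univ.erase i₁).erase i₂, ∃ k₂ ∈ (univ.erase i₁).erase i₂,
      k₁ ≠ k₂ := by
    refine Finset.one_lt_card.1 ?_
    rw [card_erase_of_mem (mem_erase.2 ⟨hi.symm, mem_univ _⟩), card_erase_of_mem (mem_univ _),
      card_univ, Fintype.card_fin]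
    omega
  simp only [mem_erase] at hk₁ hk₂
  have hfix : ∀ i, i ≠ k₁ → i ≠ k₂ → (σ * swap k₁ k₂) i = σ i := fun i h₁ h₂ => by
    rw [Perm.mul_apply, swap_apply_of_ne_of_ne h₁ h₂]
  have h₁ := hrel σ
  have h₂ := hrel (σ * swap k₁ k₂)
  rw [signWeight_mul_swap _ _ hk, signWeight_mul_swap _ _ hk,
    hfix i₁ (Ne.symm hk₁.2.1) (Ne.symm hk₂.2.1), hfix i₂ (Ne.symm hk₁.1) (Ne.symm hk₂.1)] at h₂
  rw [hσ₁, hσ₂] at h₁ h₂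
  exact eq_zero_of_mul_add_mul_eq_zero (sq_signWeight_ne hαβ hαβ' σ) h₁ h₂

theorem exists_ne_zero_add_mul_ne_zero [Infinite K] {x : K} (hx : x ≠ 0) (y : K) :
    ∃ t ≠ 0, x + t * y ≠ 0 := by
  classical
  obtain ⟨t, ht⟩ := Infinite.exists_notMem_finset ({0, -x / y} : Finset K)
  simp only [mem_insert, mem_singleton, not_or] at ht
  refine ⟨t, ht.1, fun h => ?_⟩
  rcases eq_or_ne y 0 with rfl | hy
  · simp_all
  · exact ht.2 (by rw [eq_div_iff hy]; linear_combination h)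

theorem eq_zero_off_row_of_isCrossFree_add_smul [Infinite K] {m n : Type*}
    {B D : Matrix m n K} {r : m} {c₁ c₂ : n} (hc : c₁ ≠ c₂) (h₁ : B r c₁ ≠ 0) (h₂ : B r c₂ ≠ 0)
    (hBD : ∀ t : K, IsCrossFree (B + t • D)) : ∀ a ≠ r, ∀ b, D a b = 0 := by
  intro a ha b
  by_contra hD
  obtain ⟨c, hcb, hc0⟩ : ∃ c ≠ b, B r c ≠ 0 := by
    rcases eq_or_ne b c₁ with rfl | hb
    exacts [⟨c₂, hc.symm, h₂⟩, ⟨c₁, hb.symm, h₁⟩]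
  have hBab : B a b = 0 := by simpa [hc0] using hBD 0 ha hcb.symm
  obtain ⟨t, ht, htc⟩ := exists_ne_zero_add_mul_ne_zero hc0 (D r c)
  simpa [hBab, ht, hD, htc] using hBD t ha hcb.symm

theorem LinearIndependent.card_le_of_eq_zero_off_row {m ι : Type*} [Fintype ι]
    {v : ι → Matrix m (Fin n) K} (hv : LinearIndependent K v) {r : m}
    (hr : ∀ k, ∀ a ≠ r, ∀ b, v k a b = 0) : Fintype.card ι ≤ n := by
  have hrow : LinearIndependent K fun k => v k r := by
    rw [Fintype.linearIndependent_iff] at hv ⊢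
    refine fun g hg => hv g ?_
    ext a b
    rcases eq_or_ne a r with rfl | ha
    · simpa [Matrix.sum_apply] using congrFun hg b
    · simp [Matrix.sum_apply, hr _ a ha b]
  simpa using hrow.fintype_card_le_finrank

theorem map_single_apply_eq_zero_of_same_row [Infinite K] (hn : 4 ≤ n) {α β : K}
    (hαβ : α ≠ β) (hαβ' : α ≠ -β) (T : Matrix (Fin n) (Fin n) K ≃ₗ[K] Matrix (Fin n) (Fin n) K)
    (hT : ∀ A, gdet α β (T A) = gdet α β A) {i₀ j₀ r c₁ c₂ : Fin n} (hc : c₁ ≠ c₂)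
    (h₁ : T (single i₀ j₀ 1) r c₁ ≠ 0) : T (single i₀ j₀ 1) r c₂ = 0 := by
  by_contra h₂
  have hoff : ∀ p : Fin n × Fin n, p.1 = i₀ ∨ p.2 = j₀ →
      ∀ a ≠ r, ∀ b, T (single p.1 p.2 1) a b = 0 := by
    rintro ⟨i, j⟩ hp
    refine eq_zero_off_row_of_isCrossFree_add_smul hc h₁ h₂ fun t => ?_
    rw [← map_smul, ← map_add]
    refine ((IsAffineDirection.map T hT ?_).isCrossFree hn hαβ hαβ')
    rcases hp with rfl | rfl
    · exact isAffineDirection_of_eq_zero_off_row α β (r := i) fun a ha b => by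
        simp [Ne.symm ha]
    · exact isAffineDirection_of_eq_zero_off_col α β (c := j) fun a b hb => by
        simp [Ne.symm hb]
  have : Nontrivial (Fin n) := Fin.nontrivial_iff_two_le.mpr (by omega)
  obtain ⟨i₁, hi₁⟩ := exists_ne i₀
  set g : Fin n ⊕ Unit → Fin n × Fin n := Sum.elim (fun j => (i₀, j)) fun _ => (i₁, j₀)
  have hg : Function.Injective g :=
    (Prod.mk_right_injective i₀).sumElim (fun _ _ _ => rfl) fun _ _ h =>
      hi₁ (congrArg Prod.fst h).symm
  have hv : LinearIndependent K fun k => T (stdBasis K _ _ (g k)) :=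
    ((stdBasis K _ _).linearIndependent.comp g hg).map' T.toLinearMap T.ker
  have hcard := hv.card_le_of_eq_zero_off_row (r := r) fun k => by
    rw [stdBasis_eq_single]
    exact hoff (g k) (by rcases k with j | _ <;> simp [g])
  simp at hcard

theorem map_single_apply_eq_zero_of_same_col [Infinite K] (hn : 4 ≤ n) {α β : K}
    (hαβ : α ≠ β) (hαβ' : α ≠ -β) (T : Matrix (Fin n) (Fin n) K ≃ₗ[K] Matrix (Fin n) (Fin n) K)
    (hT : ∀ A, gdet α β (T A) = gdet α β A) {i₀ j₀ r₁ r₂ c : Fin n} (hr : r₁ ≠ r₂)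
    (h₁ : T (single i₀ j₀ 1) r₁ c ≠ 0) : T (single i₀ j₀ 1) r₂ c = 0 := by
  let e := transposeLinearEquiv (Fin n) (Fin n) K K
  have hT' : ∀ A, gdet α β ((e.trans T).trans e A) = gdet α β A := fun A => by
    simp [e, gdet_transpose, hT]
  have hsingle : (e.trans T).trans e (single j₀ i₀ 1) = (T (single i₀ j₀ 1))ᵀ := by simp [e]
  simpa [hsingle] using map_single_apply_eq_zero_of_same_row hn hαβ hαβ' _ hT'
    (i₀ := j₀) (j₀ := i₀) (r := c) hr (by simpa [hsingle] using h₁)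

theorem exists_map_single_eq_smul_single [Infinite K] (hn : 4 ≤ n) {α β : K}
    (hαβ : α ≠ β) (hαβ' : α ≠ -β) (T : Matrix (Fin n) (Fin n) K ≃ₗ[K] Matrix (Fin n) (Fin n) K)
    (hT : ∀ A, gdet α β (T A) = gdet α β A) (i j : Fin n) :
    ∃ (p : Fin n × Fin n) (c : K), c ≠ 0 ∧ T (single i j 1) = c • single p.1 p.2 1 := by
  set B := T (single i j 1)
  have hB : B ≠ 0 := T.map_ne_zero_iff.mpr fun h => by simpa using congrFun₂ h i j
  obtain ⟨r, c, hrc⟩ : ∃ r c, B r c ≠ 0 := by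
    by_contra! h
    exact hB (ext h)
  have hcross : IsCrossFree B :=
    ((isAffineDirection_of_eq_zero_off_row α β (r := i) fun a ha b => by
      simp [Ne.symm ha]).map T hT).isCrossFree hn hαβ hαβ'
  refine ⟨(r, c), B r c, hrc, ?_⟩
  ext a b
  rcases eq_or_ne a r with rfl | ha
  · rcases eq_or_ne b c with rfl | hb
    · simp
    · simpa [hb.symm] using map_single_apply_eq_zero_of_same_row hn hαβ hαβ' T hT hb.symm hrc
  · have hab : B a b = 0 := by
      rcases eq_or_ne b c with rfl | hb
      · exact map_single_apply_eq_zero_of_same_col hn hαβ hαβ' T hT ha.symm hrc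
      · exact (mul_eq_zero.mp (hcross ha hb)).resolve_right hrc
    simp [hab, ha.symm]

end GeneralizedDeterminant

/-- for `n ≥ 4` and `α ≠ ±β`, if `T` stabilizes `det^{(α,β)}`, then the map
`(i,j) ↦ (i',j')` sending each position to the position of the unique nonzero entry of
`T(E_{ij})` is a bijection of `{1,…,n} × {1,…,n}`, and `T(E_{ij}) = c_{ij}·E_{i'j'}` for
nonzero scalars `c_{ij}`. -/
theorem image_of_matrix_units_monomial {K : Type*} [Field K] [CharZero K]
    {n : ℕ} (hn : 4 ≤ n) (α β : K) (hαβ : α ≠ β) (hαβ' : α ≠ -β)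
    (T : Matrix (Fin n) (Fin n) K ≃ₗ[K] Matrix (Fin n) (Fin n) K)
    (hT : ∀ A, gdet α β (T A) = gdet α β A) :
    ∃ (φ : Fin n × Fin n ≃ Fin n × Fin n) (c : Fin n → Fin n → K),
      (∀ i j : Fin n, c i j ≠ 0) ∧
      (∀ i j : Fin n,
        T (Matrix.single i j (1 : K)) =
          c i j • Matrix.single (φ (i, j)).1 (φ (i, j)).2 (1 : K)) := by
  choose q c hc hTq using fun p : Fin n × Fin n =>
    exists_map_single_eq_smul_single hn hαβ hαβ' T hT p.1 p.2
  have hq : Function.Injective q := fun p p' h => by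
    have hsingle : c p' • single p.1 p.2 (1 : K) = c p • single p'.1 p'.2 1 :=
      T.injective (by simp only [map_smul, hTq, h, smul_smul, mul_comm])
    by_contra hne
    have hp : ¬(p'.1 = p.1 ∧ p'.2 = p.2) := fun h' => hne (Prod.ext h'.1 h'.2).symm
    exact hc p' (by simpa [single_apply, hp] using congrFun₂ hsingle p.1 p.2)
  exact ⟨.ofBijective q hq.bijective_of_finite, fun i j => c (i, j), fun i j => hc _,
    fun i j => hTq (i, j)⟩
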